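/- For 0 < θ < φ < 1, the Wiener–Hopf factor F_{θ,φ}(z) = Γ((1+θ)/2 - z)·Γ((1-θ)/2 - z)/(Γ((1+φ)/2 - z)·Γ((1-φ)/2 - z)) satisfies F_{θ,φ}(iu/2)·F_{θ,φ}(-iu/2) = (cosh(πu) + cos(πφ))/(cosh(πu) + cos(πθ)) for all real u, and 1/F_{θ,φ}(z) = F_{φ,θ}(-(-z)) i.e. 1/F_{θ,φ}(z) = F_{φ,θ}(z) with θ and φ exchanged. -/

import Mathlib

open Complex Real

noncomputable def WHfactor (θ φ : ℝ) (z : ℂ) : ℂ :=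
  Complex.Gamma ((1 + θ) / 2 - z) * Complex.Gamma ((1 - θ) / 2 - z) /
    (Complex.Gamma ((1 + φ) / 2 - z) * Complex.Gamma ((1 - φ) / 2 - z))

/-!
Under `s ↦ 1 - s` the two Gamma factors in the numerator of `F(z)` are swapped with those of
`F(-z)`, and likewise in the denominator, so the reflection formula turns `F(z) F(-z)` into a
quotient of two products of sines. Since `sin a sin b = (cos (a - b) - cos (a + b)) / 2`, each
product is `(cos (π t) + cos (2 π z)) / 2`, and `cos (2 π z) = cosh (π u)` at `z = i u / 2`.
-/
namespace Complex

noncomputable def gammaPair (w z : ℂ) : ℂ :=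
  Gamma ((1 + w) / 2 - z) * Gamma ((1 - w) / 2 - z)

lemma sin_pi_mul_half_sub_mul_sin (w z : ℂ) :
    sin (π * ((1 + w) / 2 - z)) * sin (π * ((1 - w) / 2 - z)) =
      (cos (π * w) + cos (2 * π * z)) / 2 := by
  have h := cos_sub_cos (π * w) (π - 2 * π * z)
  rw [cos_pi_sub] at h
  rw [show (π * w + (π - 2 * π * z)) / 2 = π * ((1 + w) / 2 - z) by ring,
    show (π * w - (π - 2 * π * z)) / 2 = -(π * ((1 - w) / 2 - z)) by ring, sin_neg] at h
  linear_combination -h / 2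

lemma gammaPair_mul_gammaPair_neg (w z : ℂ) :
    gammaPair w z * gammaPair w (-z) = 2 * π ^ 2 / (cos (π * w) + cos (2 * π * z)) := by
  have hA : (1 + w) / 2 - -z = 1 - ((1 - w) / 2 - z) := by ring
  have hB : (1 - w) / 2 - -z = 1 - ((1 + w) / 2 - z) := by ring
  calc gammaPair w z * gammaPair w (-z)
      = (Gamma ((1 + w) / 2 - z) * Gamma (1 - ((1 + w) / 2 - z))) *
          (Gamma ((1 - w) / 2 - z) * Gamma (1 - ((1 - w) / 2 - z))) := by
        rw [gammaPair, gammaPair, hA, hB]; ring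
    _ = π / sin (π * ((1 + w) / 2 - z)) * (π / sin (π * ((1 - w) / 2 - z))) := by
        rw [Gamma_mul_Gamma_one_sub, Gamma_mul_Gamma_one_sub]
    _ = 2 * π ^ 2 / (cos (π * w) + cos (2 * π * z)) := by
        rw [div_mul_div_comm, sin_pi_mul_half_sub_mul_sin, div_div_eq_mul_div]; ring

end Complex

lemma WHfactor_eq_div_gammaPair (θ φ : ℝ) (z : ℂ) :
    WHfactor θ φ z = Complex.gammaPair θ z / Complex.gammaPair φ z := rfl

lemma WHfactor_mul_WHfactor_neg (θ φ : ℝ) (z : ℂ) :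
    WHfactor θ φ z * WHfactor θ φ (-z) =
      (Complex.cos (π * φ) + Complex.cos (2 * π * z)) /
        (Complex.cos (π * θ) + Complex.cos (2 * π * z)) := by
  rw [WHfactor_eq_div_gammaPair, WHfactor_eq_div_gammaPair, div_mul_div_comm,
    Complex.gammaPair_mul_gammaPair_neg, Complex.gammaPair_mul_gammaPair_neg,
    div_div_div_cancel_left' _ _ (by simp [Real.pi_ne_zero])]

theorem wiener_hopf_factorization_general (θ φ : ℝ) :
    (∀ u : ℝ,
      WHfactor θ φ (Complex.I * u / 2) * WHfactor θ φ (-(Complex.I * u / 2)) =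
        ((Real.cosh (Real.pi * u) + Real.cos (Real.pi * φ)) /
          (Real.cosh (Real.pi * u) + Real.cos (Real.pi * θ)) : ℝ)) ∧
    (∀ z : ℂ, 1 / WHfactor θ φ z = WHfactor φ θ z) := by
  refine ⟨fun u => ?_, fun z => one_div_div _ _⟩
  have hcosh : Complex.cos (2 * π * (Complex.I * u / 2)) = Real.cosh (π * u) := by
    rw [show 2 * (π : ℂ) * (Complex.I * u / 2) = (π * u : ℝ) * Complex.I by push_cast; ring,
      Complex.cos_mul_I, Complex.ofReal_cosh]
  rw [WHfactor_mul_WHfactor_neg, hcosh]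
  push_cast
  ring

theorem wiener_hopf_factorization (θ φ : ℝ) (h : 0 < θ ∧ θ < φ ∧ φ < 1) :
    (∀ u : ℝ,
      WHfactor θ φ (Complex.I * u / 2) * WHfactor θ φ (-(Complex.I * u / 2)) =
        ((Real.cosh (Real.pi * u) + Real.cos (Real.pi * φ)) /
          (Real.cosh (Real.pi * u) + Real.cos (Real.pi * θ)) : ℝ)) ∧
    (∀ z : ℂ, 1 / WHfactor θ φ z = WHfactor φ θ z) :=
  wiener_hopf_factorization_general θ φ
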